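/- An infinite orthonormal system in a separable Hilbert space violates the directionally (ε,η,L)-limited condition: for any a in the Hilbert space H, any 0 < η ≤ 1/3, and any positive integer L, the set D = {a + e_i : i = 1,…,L+1} (where {e_i} is orthonormal) satisfies that for all distinct b = a+e_i, c = a+e_j in D, the point x = a + (‖e_j‖/‖e_i‖)e_i satisfies ‖x−a‖ = ‖c−a‖, ‖x−b‖ = ‖b−a‖ − ‖x−a‖ in the degenerate sense, and ‖x − c‖ = ‖e_i − e_j‖ = √2 ≥ η·‖a−c‖ = η, so D is an η-separated configuration of cardinality exceeding L. -/
import Mathlib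


open Metric Classical

/-- An infinite orthonormal system in a Hilbert space violates the directionally
(ε,η,L)-limited condition: for any a, any 0 < η ≤ 1/3 and any L, the set
D = {a + eᵢ : i ≤ L} is an η-separated configuration (in the sense of the
directionally-limited condition) whose cardinality exceeds L. -/
theorem orthonormal_violates_directionally_limited
    {H : Type*} [NormedAddCommGroup H] [InnerProductSpace ℝ H] [DecidableEq H]
    (e : ℕ → H) (he : Orthonormal ℝ e) (a : H)
    (η : ℝ) (hη₀ : 0 < η) (hη₁ : η ≤ 1 / 3) (L : ℕ) :
    (∀ i j : ℕ, i ≠ j →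
      let b := a + e i
      let c := a + e j
      let x := a + (‖e j‖ / ‖e i‖) • e i
      ‖x - a‖ = ‖c - a‖ ∧
      ‖x - b‖ = ‖b - a‖ - ‖x - a‖ ∧
      ‖x - c‖ = Real.sqrt 2 ∧
      η * ‖a - c‖ ≤ ‖x - c‖) ∧
    L < (Finset.image (fun i => a + e i) (Finset.range (L + 1))).card := by
  have hnorm : ∀ i, ‖e i‖ = 1 := he.1
  constructor
  · intro i j hij
    have hni : ‖e i‖ = 1 := hnorm i
    have hnj : ‖e j‖ = 1 := hnorm j
    have hdiff : ‖e i - e j‖ = Real.sqrt 2 := by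
      have hsq : ‖e i - e j‖ ^ 2 = 2 := by
        rw [norm_sub_sq_real, hni, hnj, he.2 hij]
        ring
      have h0 : (0:ℝ) ≤ ‖e i - e j‖ := norm_nonneg _
      nlinarith [Real.sq_sqrt (by norm_num : (2:ℝ) ≥ 0),
        Real.sqrt_nonneg 2]
    have hx : a + (‖e j‖ / ‖e i‖) • e i = a + e i := by
      rw [hni, hnj]; norm_num
    refine ⟨?_, ?_, ?_, ?_⟩
    · simp [hx, hni, hnj]
    · rw [hx]; simp
    · simp only [hx]
      have : a + e i - (a + e j) = e i - e j := by abel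
      rw [this, hdiff]
    · simp only [hx]
      have h1 : a + e i - (a + e j) = e i - e j := by abel
      have h2 : a - (a + e j) = -(e j) := by abel
      rw [h1, h2, hdiff, norm_neg, hnj, mul_one]
      nlinarith [Real.sq_sqrt (by norm_num : (0:ℝ) ≤ 2), Real.sqrt_nonneg 2]
  · have hinj : Function.Injective fun i => a + e i := fun i j h => by
      have := he.linearIndependent.injective (by simpa using h)
      exact this
    rw [Finset.card_image_of_injective _ hinj, Finset.card_range]
    omega
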